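/- Let k and H be N×N complex matrices whose double commutator reproduces H, i.e. [k, [k, H]] = H where [A, B] := A*B - B*A. Then for every real φ, exp(-(Complex.I * φ) • k) * H * exp((Complex.I * φ) • k) = (Real.cos φ : ℂ) • H - (Real.sin φ : ℂ) • (Complex.I • (k*H - H*k)). In particular, for φ = π one obtains exp(-(Complex.I * π) • k) * H * exp((Complex.I * π) • k) = -H, so the unitary K := exp(-(Complex.I * π) • k) inverts H. -/

import Mathlib

/-!
`H ± [k, H]` are eigenvectors of `ad k` with eigenvalues `±1`, so conjugation by `exp (t • k)`
scales them by `exp (∓t)`. Writing `H` as their half-sum gives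
`exp (-t • k) * H * exp (t • k) = cosh t • H - sinh t • [k, H]`, and `t = iφ` turns
`cosh`, `sinh` into `cos`, `i sin`.
-/

open NormedSpace

section

variable {𝔸 : Type*} [NormedRing 𝔸] [NormedAlgebra ℂ 𝔸]

theorem exp_smul_one_eq (z : ℂ) : exp (z • (1 : 𝔸)) = Complex.exp z • (1 : 𝔸) := by
  rw [← Algebra.algebraMap_eq_smul_one, ← Algebra.algebraMap_eq_smul_one, Complex.exp_eq_exp_ℂ,
    algebraMap_exp_comm]

variable [CompleteSpace 𝔸]

theorem exp_neg_smul_mul_mul_exp_smul_of_lie_eq_smul {k X : 𝔸} {c : ℂ} (h : ⁅k, X⁆ = c • X)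
    (t : ℂ) : exp (-t • k) * X * exp (t • k) = Complex.exp (-(t * c)) • X := by
  let +nondep : NormedAlgebra ℚ 𝔸 := .restrictScalars ℚ ℂ 𝔸
  have hsemiconj : SemiconjBy X (t • k) (t • k - (t * c) • 1) := by
    rw [Ring.lie_def, sub_eq_iff_eq_add] at h
    simp only [SemiconjBy, mul_smul_comm, sub_mul, smul_mul_assoc, one_mul, h, smul_add, smul_smul]
    abel
  have hneg : -(t • k - (t * c) • (1 : 𝔸)) = (t * c) • 1 + -t • k := by
    rw [neg_smul]; abel
  have hscalar : Commute ((t * c) • (1 : 𝔸)) (-t • k) := (Commute.one_left _).smul_left _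
  have := hsemiconj.exp_neg_mul_mul_exp_eq_self
  rwa [hneg, exp_add_of_commute hscalar, exp_smul_one_eq, smul_one_mul, smul_mul_assoc,
    smul_mul_assoc, ← eq_inv_smul_iff₀ (Complex.exp_ne_zero _), ← Complex.exp_neg] at this

theorem exp_neg_smul_mul_mul_exp_smul_of_lie_lie_eq_self {k H : 𝔸} (h : ⁅k, ⁅k, H⁆⁆ = H) (t : ℂ) :
    exp (-t • k) * H * exp (t • k) = Complex.cosh t • H - Complex.sinh t • ⁅k, H⁆ := by
  have hplus : ⁅k, H + ⁅k, H⁆⁆ = (1 : ℂ) • (H + ⁅k, H⁆) := by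
    simp only [Ring.lie_def, one_smul] at h ⊢
    linear_combination (norm := noncomm_ring) h
  have hminus : ⁅k, H - ⁅k, H⁆⁆ = (-1 : ℂ) • (H - ⁅k, H⁆) := by
    simp only [Ring.lie_def, neg_one_smul] at h ⊢
    linear_combination (norm := noncomm_ring) -h
  have hH : H = (2⁻¹ : ℂ) • ((H + ⁅k, H⁆) + (H - ⁅k, H⁆)) := by module
  conv_lhs => rw [hH]
  rw [mul_smul_comm, smul_mul_assoc, mul_add, add_mul,
    exp_neg_smul_mul_mul_exp_smul_of_lie_eq_smul hplus,
    exp_neg_smul_mul_mul_exp_smul_of_lie_eq_smul hminus, Complex.cosh, Complex.sinh]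
  match_scalars <;> ring_nf

theorem exp_neg_I_mul_smul_mul_mul_exp_I_mul_smul_of_lie_lie_eq_self {k H : 𝔸}
    (h : ⁅k, ⁅k, H⁆⁆ = H) (φ : ℝ) :
    exp (-(Complex.I * φ) • k) * H * exp ((Complex.I * φ) • k) =
      (Real.cos φ : ℂ) • H - (Real.sin φ : ℂ) • (Complex.I • ⁅k, H⁆) := by
  rw [exp_neg_smul_mul_mul_exp_smul_of_lie_lie_eq_self h, mul_comm, Complex.cosh_mul_I,
    Complex.sinh_mul_I, mul_smul, Complex.ofReal_cos, Complex.ofReal_sin]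

end

theorem stmt2 (N : ℕ) (k H : Matrix (Fin N) (Fin N) ℂ)
    (hdc : k * (k * H - H * k) - (k * H - H * k) * k = H) :
    (∀ φ : ℝ,
      NormedSpace.exp (-(Complex.I * (φ : ℂ)) • k) * H *
          NormedSpace.exp ((Complex.I * (φ : ℂ)) • k) =
        ((Real.cos φ : ℂ) • H -
          (Real.sin φ : ℂ) • (Complex.I • (k * H - H * k)))) ∧
    NormedSpace.exp (-(Complex.I * (Real.pi : ℂ)) • k) * H *
        NormedSpace.exp ((Complex.I * (Real.pi : ℂ)) • k) = -H := by
  have hlie : ⁅k, ⁅k, H⁆⁆ = H := by simpa only [Ring.lie_def] using hdc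
  -- any Banach-algebra norm on matrices induces their product topology, which is all `exp` sees
  have hrot (φ : ℝ) := open scoped Matrix.Norms.Operator in
    exp_neg_I_mul_smul_mul_mul_exp_I_mul_smul_of_lie_lie_eq_self hlie φ
  refine ⟨fun φ => (hrot φ).trans (by rw [Ring.lie_def]), (hrot Real.pi).trans ?_⟩
  simp
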